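/- Let τ, α, ν > 0 and let z ∈ [-1,1]. Then (1/B(α,ν)) ∫₀¹ ((1-δ)/(1-δ z))^τ δ^{α-1} (1-δ)^{ν-1} dδ = (B(α,ν+τ)/B(α,ν)) · Σ_{n=0}^∞ (τ)_n (α)_n / ((α+ν+τ)_n · n!) · z^n, where the series on the right-hand side converges. -/

import Mathlib

open Real MeasureTheory

/-- Euler Beta function `B(a,b) = Γ(a)Γ(b)/Γ(a+b)`. -/
noncomputable def betaFn (a b : ℝ) : ℝ := Real.Gamma a * Real.Gamma b / Real.Gamma (a + b)

/-- Pochhammer symbol (rising factorial) `(x)_n = x(x+1)⋯(x+n-1)`. -/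
noncomputable def poch (x : ℝ) (n : ℕ) : ℝ := Polynomial.eval x (ascPochhammer ℝ n)

/-- The Beta mixture of negative-binomial kernels evaluated at `z ∈ [-1,1]`:
`(1/B(α,ν)) ∫₀¹ ((1-δ)/(1-δz))^τ δ^{α-1} (1-δ)^{ν-1} dδ`. -/
noncomputable def betaMix (τ α ν z : ℝ) : ℝ :=
  (1 / betaFn α ν) * ∫ δ in Set.Ioo (0:ℝ) 1,
    ((1 - δ) / (1 - δ * z)) ^ τ * δ ^ (α - 1) * (1 - δ) ^ (ν - 1)

/-!
Expand `(1 - δz)^(-τ) = ∑ (τ)_n/n! (δz)^n` by the binomial series and integrate term by term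
against the Beta kernel `δ^(α-1) (1-δ)^(ν+τ-1)`; the `n`-th term is the Beta integral
`B(α+n, ν+τ) = B(α, ν+τ) (α)_n / (α+ν+τ)_n`. Termwise integration is justified by dominated
convergence: the series of absolute values sums to `(1 - δ|z|)^(-τ) ≤ (1-δ)^(-τ)`, and
`(1-δ)^(-τ)` times the kernel is the integrable Beta kernel with parameters `α, ν`.
-/

open Set

lemma poch_succ (x : ℝ) (n : ℕ) : poch x (n + 1) = poch x n * (x + n) := by
  simp [poch, ascPochhammer_succ_eval]

lemma poch_pos {x : ℝ} (hx : 0 < x) (n : ℕ) : 0 < poch x n := by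
  induction n with
  | zero => simp [poch]
  | succ n ih => rw [poch_succ]; positivity

lemma Gamma_add_nat_eq_poch_mul_Gamma {x : ℝ} (hx : 0 < x) (n : ℕ) :
    Gamma (x + n) = poch x n * Gamma x := by
  induction n with
  | zero => simp [poch]
  | succ n ih =>
    rw [Nat.cast_succ, ← add_assoc, Gamma_add_one (by positivity), ih, poch_succ]
    ring

lemma betaFn_pos {a b : ℝ} (ha : 0 < a) (hb : 0 < b) : 0 < betaFn a b :=
  ProbabilityTheory.beta_pos ha hb

lemma betaFn_add_nat {a b : ℝ} (ha : 0 < a) (hb : 0 < b) (n : ℕ) :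
    betaFn (a + n) b = betaFn a b * poch a n / poch (a + b) n := by
  have hab : 0 < a + b := add_pos ha hb
  have := (Gamma_pos_of_pos hab).ne'
  have := (poch_pos hab n).ne'
  rw [betaFn, betaFn, Gamma_add_nat_eq_poch_mul_Gamma ha, add_right_comm,
    Gamma_add_nat_eq_poch_mul_Gamma hab]
  field_simp

lemma choose_add_sub_one_eq_poch_div_factorial (a : ℝ) (n : ℕ) :
    Ring.choose (a + n - 1) n = poch a n / n.factorial := by
  rw [Ring.choose_eq_smul, Polynomial.descPochhammer_smeval_eq_ascPochhammer,
    Polynomial.ascPochhammer_smeval_eq_eval, poch, smul_eq_mul, inv_mul_eq_div]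
  congr 2
  ring

lemma hasSum_poch_div_factorial_mul_pow (a : ℝ) {x : ℝ} (hx : |x| < 1) :
    HasSum (fun n : ℕ => poch a n / n.factorial * x ^ n) ((1 - x) ^ (-a)) := by
  have h := (one_div_one_sub_rpow_hasFPowerSeriesOnBall_zero a).hasSum
    (y := x) (by simpa [enorm_eq_nnnorm, ← NNReal.coe_lt_one] using hx)
  simpa [FormalMultilinearSeries.ofScalars_apply_eq, choose_add_sub_one_eq_poch_div_factorial,
    rpow_neg (show 0 ≤ 1 - x by linarith [le_abs_self x]), mul_comm] using h

lemma integrableOn_rpow_mul_one_sub_rpow {a b : ℝ} (ha : 0 < a) (hb : 0 < b) :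
    IntegrableOn (fun x : ℝ => x ^ (a - 1) * (1 - x) ^ (b - 1)) (Ioo 0 1) := by
  have h := Complex.betaIntegral_convergent (u := a) (v := b) (by simpa) (by simpa)
  rw [intervalIntegrable_iff_integrableOn_Ioo_of_le zero_le_one] at h
  refine IntegrableOn.congr_fun h.norm (fun x ⟨hx0, hx1⟩ => ?_) measurableSet_Ioo
  rw [norm_mul, show 1 - (x : ℂ) = ((1 - x : ℝ) : ℂ) by push_cast; ring,
    Complex.norm_cpow_eq_rpow_re_of_pos hx0, Complex.norm_cpow_eq_rpow_re_of_pos (by linarith)]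
  simp

lemma integral_rpow_mul_one_sub_rpow {a b : ℝ} (ha : 0 < a) (hb : 0 < b) :
    ∫ x in Ioo (0:ℝ) 1, x ^ (a - 1) * (1 - x) ^ (b - 1) = betaFn a b := by
  have h : Complex.betaIntegral a b
      = ((∫ x in (0:ℝ)..1, x ^ (a - 1) * (1 - x) ^ (b - 1) : ℝ) : ℂ) := by
    rw [Complex.betaIntegral, ← intervalIntegral.integral_ofReal]
    refine intervalIntegral.integral_congr fun x hx => ?_
    rw [uIcc_of_le zero_le_one] at hx
    rw [Complex.ofReal_mul, Complex.ofReal_cpow hx.1, Complex.ofReal_cpow (by linarith [hx.2])]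
    push_cast
    ring
  rw [betaFn, ← ProbabilityTheory.beta, ProbabilityTheory.beta_eq_betaIntegralReal a b ha hb, h,
    Complex.ofReal_re, intervalIntegral.integral_of_le zero_le_one, integral_Ioc_eq_integral_Ioo]

lemma abs_mul_lt_one {x z : ℝ} (hx : x ∈ Ioo (0:ℝ) 1) (hz : |z| ≤ 1) : |x * z| < 1 := by
  rw [abs_mul, abs_of_pos hx.1]
  exact mul_lt_one_of_nonneg_of_lt_one_left hx.1.le hx.2 hz

lemma integral_pow_mul_rpow_mul_one_sub_rpow {a b : ℝ} (ha : 0 < a) (hb : 0 < b) (n : ℕ) :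
    ∫ x in Ioo (0:ℝ) 1, x ^ n * (x ^ (a - 1) * (1 - x) ^ (b - 1)) = betaFn (a + n) b := by
  rw [← integral_rpow_mul_one_sub_rpow (by positivity) hb]
  refine setIntegral_congr_fun measurableSet_Ioo fun x hx => ?_
  rw [← mul_assoc, ← rpow_natCast, ← rpow_add hx.1, add_sub_right_comm, add_comm]

lemma one_sub_mul_rpow_neg_mul_le {τ a b x z : ℝ} (hτ : 0 ≤ τ) (hx : x ∈ Ioo (0:ℝ) 1)
    (hz : |z| ≤ 1) :
    (1 - x * |z|) ^ (-τ) * (x ^ (a - 1) * (1 - x) ^ (b - 1))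
      ≤ x ^ (a - 1) * (1 - x) ^ (b - τ - 1) := by
  obtain ⟨hx0, hx1⟩ := hx
  have hmono : (1 - x * |z|) ^ (-τ) ≤ (1 - x) ^ (-τ) :=
    rpow_le_rpow_of_nonpos (by linarith) (by nlinarith [abs_nonneg z]) (by linarith)
  calc (1 - x * |z|) ^ (-τ) * (x ^ (a - 1) * (1 - x) ^ (b - 1))
      ≤ (1 - x) ^ (-τ) * (x ^ (a - 1) * (1 - x) ^ (b - 1)) := by gcongr
    _ = x ^ (a - 1) * (1 - x) ^ (b - τ - 1) := by
      rw [mul_left_comm, ← rpow_add (by linarith)]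
      ring_nf

/-- Euler's integral for `₂F₁(τ, a; a + b; z)`, expanded term by term. -/
theorem hasSum_integral_one_sub_mul_rpow_neg {τ a b z : ℝ} (hτ : 0 < τ) (ha : 0 < a)
    (hτb : τ < b) (hz : |z| ≤ 1) :
    HasSum (fun n : ℕ => poch τ n / n.factorial * z ^ n * betaFn (a + n) b)
      (∫ x in Ioo (0:ℝ) 1, (1 - x * z) ^ (-τ) * (x ^ (a - 1) * (1 - x) ^ (b - 1))) := by
  set w : ℝ → ℝ := fun x => x ^ (a - 1) * (1 - x) ^ (b - 1)
  set F : ℕ → ℝ → ℝ := fun n x => poch τ n / n.factorial * (x * z) ^ n * w x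
  have hb : 0 < b := hτ.trans hτb
  have hw : ∀ x ∈ Ioo (0:ℝ) 1, 0 ≤ w x := fun x hx =>
    mul_nonneg (rpow_nonneg hx.1.le _) (rpow_nonneg (by linarith [hx.2]) _)
  have hnorm : ∀ x ∈ Ioo (0:ℝ) 1,
      HasSum (fun n => ‖F n x‖) ((1 - x * |z|) ^ (-τ) * w x) := by
    intro x hx
    have hF : ∀ n, ‖F n x‖ = poch τ n / n.factorial * (x * |z|) ^ n * w x := fun n => by
      simp only [F, norm_mul, norm_div, norm_pow, Real.norm_eq_abs, Nat.abs_cast,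
        abs_of_pos (poch_pos hτ n), abs_of_pos hx.1, abs_of_nonneg (hw x hx)]
    simp only [hF]
    exact (hasSum_poch_div_factorial_mul_pow τ
      (abs_mul_lt_one hx ((abs_abs z).trans_le hz))).mul_right _
  have hterm : ∀ n,
      ∫ x in Ioo (0:ℝ) 1, F n x = poch τ n / n.factorial * z ^ n * betaFn (a + n) b := by
    intro n
    have hFn : F n = fun x => poch τ n / n.factorial * z ^ n * (x ^ n * w x) :=
      funext fun x => by simp only [F]; ring
    rw [hFn, integral_const_mul, integral_pow_mul_rpow_mul_one_sub_rpow ha hb]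
  simp only [← hterm]
  refine hasSum_integral_of_dominated_convergence (fun n x => ‖F n x‖)
    (fun n => (by fun_prop : Measurable (F n)).aestronglyMeasurable)
    (fun n => ae_of_all _ fun x => le_rfl)
    (ae_restrict_of_forall_mem measurableSet_Ioo fun x hx => (hnorm x hx).summable) ?_
    (ae_restrict_of_forall_mem measurableSet_Ioo fun x hx =>
      (hasSum_poch_div_factorial_mul_pow τ (abs_mul_lt_one hx hz)).mul_right (w x))
  refine Integrable.mono' (integrableOn_rpow_mul_one_sub_rpow ha (sub_pos.2 hτb)) (by fun_prop)
    (ae_restrict_of_forall_mem measurableSet_Ioo fun x hx => ?_)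
  rw [(hnorm x hx).tsum_eq, Real.norm_of_nonneg ((hnorm x hx).nonneg fun n => norm_nonneg _)]
  exact one_sub_mul_rpow_neg_mul_le hτ.le hx hz

/-- For `τ, α, ν > 0` and `z ∈ [-1,1]`, the Beta mixture equals the convergent
Gauss hypergeometric series `(B(α,ν+τ)/B(α,ν)) Σ_n (τ)_n (α)_n / ((α+ν+τ)_n n!) z^n`. -/
theorem betaMix_eq_hypergeometric (τ α ν : ℝ) (hτ : 0 < τ) (hα : 0 < α) (hν : 0 < ν)
    (z : ℝ) (hz : z ∈ Set.Icc (-1:ℝ) 1) :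
    HasSum
      (fun n : ℕ => betaFn α (ν + τ) / betaFn α ν *
        (poch τ n * poch α n / (poch (α + ν + τ) n * n.factorial)) * z ^ n)
      (betaMix τ α ν z) := by
  have hz_abs : |z| ≤ 1 := abs_le.2 hz
  have hintegrand : ∀ δ ∈ Ioo (0:ℝ) 1,
      ((1 - δ) / (1 - δ * z)) ^ τ * δ ^ (α - 1) * (1 - δ) ^ (ν - 1)
        = (1 - δ * z) ^ (-τ) * (δ ^ (α - 1) * (1 - δ) ^ (ν + τ - 1)) := fun δ hδ => by
    have h1 : 0 < 1 - δ := by linarith [hδ.2]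
    have h2 : 0 < 1 - δ * z := by linarith [(abs_lt.1 (abs_mul_lt_one hδ hz_abs)).2]
    rw [div_rpow h1.le h2.le, rpow_neg h2.le, show ν + τ - 1 = τ + (ν - 1) by ring, rpow_add h1]
    ring
  have hcoeff : ∀ n : ℕ, betaFn α (ν + τ) / betaFn α ν *
      (poch τ n * poch α n / (poch (α + ν + τ) n * n.factorial)) * z ^ n
        = 1 / betaFn α ν * (poch τ n / n.factorial * z ^ n * betaFn (α + n) (ν + τ)) := by
    intro n
    have := (betaFn_pos hα hν).ne'
    have := (poch_pos (show 0 < α + ν + τ by positivity) n).ne'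
    rw [betaFn_add_nat hα (by positivity), ← add_assoc]
    field_simp
  rw [betaMix, setIntegral_congr_fun measurableSet_Ioo hintegrand, funext hcoeff]
  exact (hasSum_integral_one_sub_mul_rpow_neg hτ hα (by linarith) hz_abs).mul_left _
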